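/- arXiv:1603.00691 — 4 statements merged into one kernel-verified Lean document; each statement's English description precedes it below -/
import Mathlib

section
/- Let G be a finite group, ψ : G → ℂ positive definite with ψ(1) = 1 and |ψ(g)| ≤ 1 for all g, and suppose that the set A := { k ∈ G : |1 - ψ(k)| < δ } satisfies |A| ≥ (2/3)|G|. Then every h ∈ G can be written h = k₁k₂ with k₁, k₂ ∈ A, and consequently |1 - ψ(h)| ≤ δ + √(2δ) for all h ∈ G. -/
/-!
Since `|A| > |G| / 2`, the sets `A` and `h A⁻¹` meet, so `h = k₁ k₂` with `k₁, k₂ ∈ A`.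
The inequality defining positive definiteness, applied to `k₁` and `h = k₁ k₂`, gives
`|ψ(k₁) - ψ(h)|² ≤ 2 Re (1 - ψ(k₂)) < 2δ`, and the triangle inequality through `ψ(k₁)`
finishes.
-/

open Finset

theorem Finset.exists_mul_eq_of_card_lt_card_add_card {G : Type*} [Group G] [Fintype G]
    {A B : Finset G} (hAB : Fintype.card G < #A + #B) (g : G) :
    ∃ a ∈ A, ∃ b ∈ B, a * b = g := by
  classical
  have hcard : #(B.image fun b => g * b⁻¹) = #B :=
    card_image_of_injective _ fun b b' hbb' => by simpa using hbb'
  obtain ⟨a, ha⟩ := inter_nonempty_of_card_lt_card_add_card (subset_univ A)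
    (subset_univ (B.image fun b => g * b⁻¹)) (by rwa [card_univ, hcard])
  obtain ⟨haA, haB⟩ := mem_inter.1 ha
  obtain ⟨b, hbB, rfl⟩ := mem_image.1 haB
  exact ⟨_, haA, b, hbB, by group⟩

section PositiveDefinite

variable {G : Type*} [Group G] {ψ : G → ℂ}

theorem norm_sub_apply_mul_le_sqrt
    (hineq : ∀ g h : G, ‖ψ g - ψ h‖ ^ 2 ≤ 2 * (1 - (ψ (g⁻¹ * h)).re)) (g k : G) :
    ‖ψ g - ψ (g * k)‖ ≤ √(2 * ‖1 - ψ k‖) := by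
  rw [Real.le_sqrt (norm_nonneg _) (by positivity)]
  calc ‖ψ g - ψ (g * k)‖ ^ 2 ≤ 2 * (1 - (ψ k).re) := by
        simpa using hineq g (g * k)
    _ = 2 * (1 - ψ k).re := by simp
    _ ≤ 2 * ‖1 - ψ k‖ := by gcongr; exact Complex.re_le_norm _

theorem norm_one_sub_apply_mul_le
    (hineq : ∀ g h : G, ‖ψ g - ψ h‖ ^ 2 ≤ 2 * (1 - (ψ (g⁻¹ * h)).re)) (k₁ k₂ : G) :
    ‖1 - ψ (k₁ * k₂)‖ ≤ ‖1 - ψ k₁‖ + √(2 * ‖1 - ψ k₂‖) :=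
  calc ‖1 - ψ (k₁ * k₂)‖ = ‖(1 - ψ k₁) + (ψ k₁ - ψ (k₁ * k₂))‖ := by ring_nf
    _ ≤ ‖1 - ψ k₁‖ + ‖ψ k₁ - ψ (k₁ * k₂)‖ := norm_add_le _ _
    _ ≤ ‖1 - ψ k₁‖ + √(2 * ‖1 - ψ k₂‖) := by
      gcongr
      exact norm_sub_apply_mul_le_sqrt hineq _ _

end PositiveDefinite

theorem posdef_large_set_spreads_general {G : Type*} [Group G] [Fintype G]
    (ψ : G → ℂ) (δ : ℝ)
    (hineq : ∀ g h : G,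
      ‖ψ g - ψ h‖ ^ 2 ≤ 2 * (1 - (ψ (g⁻¹ * h)).re))
    (hA : (2 : ℝ) / 3 * Fintype.card G ≤
      (Finset.univ.filter (fun k : G => ‖1 - ψ k‖ < δ)).card) :
    (∀ h : G, ∃ k₁ k₂ : G, ‖1 - ψ k₁‖ < δ ∧
        ‖1 - ψ k₂‖ < δ ∧ h = k₁ * k₂) ∧
    ∀ h : G, ‖1 - ψ h‖ ≤ δ + Real.sqrt (2 * δ) := by
  set A := Finset.univ.filter fun k : G => ‖1 - ψ k‖ < δ
  have hcard : Fintype.card G < #A + #A := by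
    have : (0 : ℝ) < Fintype.card G := mod_cast Fintype.card_pos
    exact_mod_cast (by linarith : (Fintype.card G : ℝ) < #A + #A)
  have hsplit (h : G) :
      ∃ k₁ k₂ : G, ‖1 - ψ k₁‖ < δ ∧ ‖1 - ψ k₂‖ < δ ∧ h = k₁ * k₂ := by
    obtain ⟨k₁, hk₁, k₂, hk₂, rfl⟩ := exists_mul_eq_of_card_lt_card_add_card hcard h
    exact ⟨k₁, k₂, (mem_filter.1 hk₁).2, (mem_filter.1 hk₂).2, rfl⟩
  refine ⟨hsplit, fun h => ?_⟩
  obtain ⟨k₁, k₂, hk₁, hk₂, rfl⟩ := hsplit h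
  calc ‖1 - ψ (k₁ * k₂)‖ ≤ ‖1 - ψ k₁‖ + √(2 * ‖1 - ψ k₂‖) :=
        norm_one_sub_apply_mul_le hineq k₁ k₂
    _ ≤ δ + √(2 * δ) := by gcongr

/-- Let `G` be a finite group and `ψ : G → ℂ` with `ψ(1) = 1`, `|ψ| ≤ 1`, obeying
the positive-definiteness inequality `|ψ(g) - ψ(h)|² ≤ 2(1 - Re ψ(g⁻¹h))`.
If the set `A = {k : |1 - ψ(k)| < δ}` has `|A| ≥ (2/3)|G|`, then every `h ∈ G` is
a product of two elements of `A`, and `|1 - ψ(h)| ≤ δ + √(2δ)` for all `h`. -/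
theorem posdef_large_set_spreads {G : Type*} [Group G] [Fintype G]
    (ψ : G → ℂ) (δ : ℝ) (hδ : 0 < δ)
    (h1 : ψ 1 = 1) (hbd : ∀ g : G, ‖ψ g‖ ≤ 1)
    (hineq : ∀ g h : G,
      ‖ψ g - ψ h‖ ^ 2 ≤ 2 * (1 - (ψ (g⁻¹ * h)).re))
    (hA : (2 : ℝ) / 3 * Fintype.card G ≤
      (Finset.univ.filter (fun k : G => ‖1 - ψ k‖ < δ)).card) :
    (∀ h : G, ∃ k₁ k₂ : G, ‖1 - ψ k₁‖ < δ ∧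
        ‖1 - ψ k₂‖ < δ ∧ h = k₁ * k₂) ∧
    ∀ h : G, ‖1 - ψ h‖ ≤ δ + Real.sqrt (2 * δ) :=
  posdef_large_set_spreads_general ψ δ hineq hA
end

section
/- For n ≥ 2 and any field F, the homogeneous space SL_n(F)/SL_{n-1}(F) has diameter at most 2/n with respect to the quotient of the normalized rank metric. Concretely: for every g ∈ SL_n(F) there exists h ∈ SL_{n-1}(F) (embedded as the stabilizer of the last basis vector eₙ) such that rank(hg - 1) ≤ 2, i.e., d(hg, 1) ≤ 2/n. -/
/-!
Write `g = [[A, b], [c, d]]` with `A` the upper left `(n-1) × (n-1)` block. It suffices to find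
`k ∈ SL_{n-1}(F)` with `A - k = u wᵀ` and `b ∈ F u`: then `g - diag(k, 1)` is a rank-one matrix
supported on the first `n - 1` rows plus a matrix supported on the last row, and
`h = diag(k⁻¹, 1)` gives `hg - 1 = h (g - diag(k, 1))`.

Bordering `A` by a column and a row gives `det (A - u wᵀ) = det A - w ⬝ adj(A) u` and
`det g = d det A - c ⬝ adj(A) b`, with no invertibility assumption on `A`
(`adj(A) u` is `A.cramer u`). If `adj(A) b ≠ 0`, take `u = b` and choose `w` to make the
determinant `1`. Otherwise `det g ≠ 0` forces `det A ≠ 0`, hence `b = 0`, and any `u ≠ 0` works.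
-/

namespace Matrix

section CommRing

variable {m n : Type*} [Fintype n] [DecidableEq n] {R : Type*} [CommRing R]

theorem det_fromBlocks_single_zero (A : Matrix n n R) (B : Matrix n PUnit R) (j : n) :
    (fromBlocks A B (of fun _ => Pi.single j 1) 0).det = -A.cramer (fun i => B i .unit) j := by
  have hswap : (fromBlocks A B (of fun _ => Pi.single j 1) 0).submatrix id
      (Equiv.swap (Sum.inl j) (Sum.inr .unit)) =
      fromBlocks (A.updateCol j fun i => B i .unit) (of fun i _ => A i j) 0
        (1 : Matrix PUnit PUnit R) := by
    ext (i | i) (l | l) <;> simp [Equiv.swap_apply_def, updateCol_apply] <;>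
      split_ifs <;> simp_all
  have := det_permute' (Equiv.swap (Sum.inl j) (Sum.inr .unit))
    (fromBlocks A B (of fun _ => Pi.single j 1) 0)
  rw [hswap, det_fromBlocks_zero₂₁, det_one, mul_one, Equiv.Perm.sign_swap (by simp)] at this
  rw [cramer_apply, this]
  simp

theorem det_fromBlocks_punit (A : Matrix n n R) (B : Matrix n PUnit R) (C : Matrix PUnit n R)
    (D : Matrix PUnit PUnit R) :
    (fromBlocks A B C D).det =
      D .unit .unit * A.det - (fun j => C .unit j) ⬝ᵥ A.cramer fun i => B i .unit := by
  rw [det_eq_sum_mul_adjugate_row _ (Sum.inr .unit), Fintype.sum_sum_type]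
  have hinl (j : n) : (fromBlocks A B C D).updateRow (Sum.inr .unit) (Pi.single (Sum.inl j) 1) =
      fromBlocks A B (of fun _ => Pi.single j 1) 0 := by
    ext (i | i) (l | l) <;> simp [updateRow_apply, Pi.single_apply]
  have hinr : (fromBlocks A B C D).updateRow (Sum.inr .unit) (Pi.single (Sum.inr .unit) 1) =
      fromBlocks A B 0 1 := by
    ext (i | i) (l | l) <;> simp [updateRow_apply]
  simp only [adjugate_apply, hinl, hinr, det_fromBlocks_single_zero, det_fromBlocks_zero₂₁,
    det_one, mul_one, fromBlocks_apply₂₁, fromBlocks_apply₂₂, Fintype.sum_unique, mul_neg,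
    Finset.sum_neg_distrib, dotProduct]
  ring

theorem det_sub_vecMulVec (A : Matrix n n R) (u v : n → R) :
    (A - vecMulVec u v).det = A.det - v ⬝ᵥ A.cramer u := by
  have := det_fromBlocks_punit A (replicateCol Unit u) (replicateRow Unit v) 1
  rw [det_fromBlocks_one₂₂, ← vecMulVec_eq] at this
  simpa using this

theorem cramer_eq_zero_iff_of_det_ne_zero [IsDomain R] {A : Matrix n n R} (hA : A.det ≠ 0)
    {b : n → R} : A.cramer b = 0 ↔ b = 0 := by
  refine ⟨fun h => ?_, fun h => by rw [h, map_zero]⟩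
  have := mulVec_cramer A b
  rw [h, mulVec_zero, eq_comm, smul_eq_zero] at this
  exact this.resolve_left hA

omit [DecidableEq n] in
theorem rank_vecMulVec_add_vecMulVec_le [Fintype m] [StrongRankCondition R]
    (u₁ u₂ : m → R) (v₁ v₂ : n → R) : (vecMulVec u₁ v₁ + vecMulVec u₂ v₂).rank ≤ 2 := by
  have hfac : vecMulVec u₁ v₁ + vecMulVec u₂ v₂ =
      of (fun i k => ![u₁ i, u₂ i] k) * of (fun k j => ![v₁ j, v₂ j] k) := by
    ext i j
    simp [mul_apply, Fin.sum_univ_two, vecMulVec_apply]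
  rw [hfac]
  exact (rank_mul_le_left _ _).trans ((rank_le_card_width _).trans (by simp))

end CommRing

section Field

variable {n : Type*} [Fintype n] [DecidableEq n] {F : Type*} [Field F]

theorem exists_det_sub_vecMulVec_eq_one (A : Matrix n n F) {u : n → F} (hu : A.cramer u ≠ 0) :
    ∃ w, (A - vecMulVec u w).det = 1 := by
  obtain ⟨j, hj⟩ := Function.ne_iff.mp hu
  refine ⟨Pi.single j ((A.det - 1) / A.cramer u j), ?_⟩
  rw [det_sub_vecMulVec, single_dotProduct, div_mul_cancel₀ _ hj, sub_sub_cancel]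

theorem exists_det_sub_vecMulVec_eq_one_and_eq_smul {A : Matrix n n F} {b : n → F}
    (h : A.det ≠ 0 ∨ A.cramer b ≠ 0) :
    ∃ (u w : n → F) (t : F), (A - vecMulVec u w).det = 1 ∧ b = t • u := by
  by_cases hb : A.cramer b = 0
  · have hA : A.det ≠ 0 := h.resolve_right (not_not.mpr hb)
    have hb0 : b = 0 := (cramer_eq_zero_iff_of_det_ne_zero hA).mp hb
    rcases isEmpty_or_nonempty n with hn | ⟨⟨j⟩⟩
    · exact ⟨0, 0, 0, by simp, by simp [hb0]⟩
    · have hu : A.cramer (Pi.single j 1) ≠ 0 := by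
        rw [Ne, cramer_eq_zero_iff_of_det_ne_zero hA]
        exact Pi.single_ne_zero_iff.mpr one_ne_zero
      obtain ⟨w, hw⟩ := exists_det_sub_vecMulVec_eq_one A hu
      exact ⟨_, w, 0, hw, by simp [hb0]⟩
  · obtain ⟨w, hw⟩ := exists_det_sub_vecMulVec_eq_one A hb
    exact ⟨b, w, 1, hw, (one_smul F b).symm⟩

theorem exists_det_eq_one_rank_sub_fromBlocks_le_two (g : Matrix (n ⊕ PUnit) (n ⊕ PUnit) F)
    (hg : g.det ≠ 0) : ∃ k : Matrix n n F, k.det = 1 ∧ (g - fromBlocks k 0 0 1).rank ≤ 2 := by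
  set A := g.toBlocks₁₁
  set b : n → F := fun i => g (.inl i) (.inr .unit)
  have hAb : A.det ≠ 0 ∨ A.cramer b ≠ 0 := by
    by_contra! h
    apply hg
    rw [← fromBlocks_toBlocks g, det_fromBlocks_punit]
    simp [A, b, toBlocks₁₂, h.1, h.2]
  obtain ⟨u, w, t, hk, hb⟩ := exists_det_sub_vecMulVec_eq_one_and_eq_smul hAb
  refine ⟨A - vecMulVec u w, hk, ?_⟩
  have hsplit : g - fromBlocks (A - vecMulVec u w) 0 0 1 =
      vecMulVec (Sum.elim u 0) (Sum.elim w fun _ => t) +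
        vecMulVec (Sum.elim 0 1) (g (.inr .unit) - Pi.single (.inr .unit) 1) := by
    ext (i | i) (j | j)
    · simp [A, toBlocks₁₁, vecMulVec_apply]
    · simpa [vecMulVec_apply, mul_comm] using congrFun hb i
    · simp [vecMulVec_apply]
    · simp [vecMulVec_apply]
  rw [hsplit]
  exact rank_vecMulVec_add_vecMulVec_le _ _ _ _

end Field

end Matrix

namespace Matrix.SpecialLinearGroup

variable {ι : Type*} [Fintype ι] [DecidableEq ι] {F : Type*} [Field F]

theorem exists_stabilizer_rank_mul_sub_one_le_two (i₀ : ι) (g : SpecialLinearGroup ι F) :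
    ∃ h : SpecialLinearGroup ι F,
      (∀ i, h.val i i₀ = if i = i₀ then 1 else 0) ∧
      (∀ j, h.val i₀ j = if j = i₀ then 1 else 0) ∧
      ((h * g).val - 1).rank ≤ 2 := by
  let e : {i // i ≠ i₀} ⊕ Unit ≃ ι := Equiv.subtypeNeSumPUnit i₀
  have he_inr : e (.inr ()) = i₀ := rfl
  set g' := reindex e.symm e.symm g.val
  obtain ⟨k, hk, hrank⟩ := exists_det_eq_one_rank_sub_fromBlocks_le_two g' (by simp [g'])
  set M : Matrix ({i // i ≠ i₀} ⊕ Unit) ({i // i ≠ i₀} ⊕ Unit) F := fromBlocks k⁻¹ 0 0 1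
  have hM : M * fromBlocks k 0 0 1 = 1 := by
    simp [M, fromBlocks_multiply, nonsing_inv_mul _ (hk ▸ isUnit_one)]
  have hMdet : (reindex e e M).det = 1 := by simp [M, hk]
  refine ⟨(⟨reindex e e M, hMdet⟩ : SpecialLinearGroup ι F), ?_, ?_, ?_⟩
  · intro i
    obtain ⟨x | x, rfl⟩ := e.surjective i <;> simp [M, ← he_inr]
  · intro j
    obtain ⟨x | x, rfl⟩ := e.surjective j <;> simp [M, ← he_inr]
  · have hg : g.val = reindex e e g' := by simp [g']
    have hfac : reindex e e M * g.val - 1 = reindex e e (M * (g' - fromBlocks k 0 0 1)) := by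
      rw [Matrix.mul_sub, hM, hg, ← coe_reindexAlgEquiv F F, ← map_mul,
        ← map_one (reindexAlgEquiv F F e), ← map_sub]
    change (reindex e e M * g.val - 1).rank ≤ 2
    rw [hfac, rank_reindex]
    exact (rank_mul_le_right _ _).trans hrank

end Matrix.SpecialLinearGroup

/-- For `n ≥ 2` and any field `F`, the homogeneous space `SL_n(F)/SL_{n-1}(F)` has
diameter at most `2/n` in the normalized rank metric: for every `g ∈ SL_n(F)` there
is `h` in the copy of `SL_{n-1}(F)` stabilizing the last basis vector (block
diagonal with lower-right entry `1`) such that `rank(hg - 1) ≤ 2`, i.e.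
`d(hg, 1) ≤ 2/n`. -/
theorem sl_quotient_diameter (n : ℕ) (hn : 2 ≤ n) (F : Type) [Field F]
    (g : Matrix.SpecialLinearGroup (Fin n) F) :
    ∃ h : Matrix.SpecialLinearGroup (Fin n) F,
      (∀ i : Fin n, h.val i ⟨n - 1, by omega⟩ =
          if i = ⟨n - 1, by omega⟩ then 1 else 0) ∧
      (∀ j : Fin n, h.val ⟨n - 1, by omega⟩ j =
          if j = ⟨n - 1, by omega⟩ then 1 else 0) ∧
      Matrix.rank ((h * g).val - 1) ≤ 2 ∧
      (Matrix.rank ((h * g).val - 1) : ℝ) / n ≤ 2 / n := by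
  obtain ⟨h, hcol, hrow, hrank⟩ :=
    Matrix.SpecialLinearGroup.exists_stabilizer_rank_mul_sub_one_le_two ⟨n - 1, by omega⟩ g
  exact ⟨h, hcol, hrow, hrank, by gcongr; exact_mod_cast hrank⟩
end

section
/- Let G be a finite group with a metric d and normalized counting measure μ, and suppose the concentration estimate holds: every A ⊆ G with μ(A) ≥ c has μ(N_ε(A)) ≥ 1 - η, where N_ε denotes the ε-neighborhood. Let 𝒰 be a cover of G with Lebesgue number ε (every point's ε-ball is contained in some member of 𝒰) of cardinality at most m with m ≤ 1/c, and let F ⊆ G with |F|·η < 1. Then there exist U ∈ 𝒰 and g ∈ G with gF ⊆ U. -/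
open scoped Classical

/-- Let `G` be a finite group with a left-invariant metric, `μ` the normalized
counting measure, and suppose concentration holds: every `A ⊆ G` with `μ(A) ≥ c`
has `μ(N_ε(A)) ≥ 1 - η`.  If `𝒰` is a cover of `G` with Lebesgue number `ε` of
cardinality at most `m` with `mc ≤ 1`, and `F ⊆ G` satisfies `|F| η < 1`, then
some left-translate `gF` is contained in a single member of `𝒰`. -/
theorem ramsey_from_concentration {G : Type*} [Group G] [Fintype G] [Nonempty G]
    [MetricSpace G] (hinv : ∀ a g h : G, dist (a * g) (a * h) = dist g h)
    (c η ε : ℝ) (hc : 0 < c) (hc1 : c < 1) (hη : 0 < η) (hη1 : η < 1) (hε : 0 < ε)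
    (hconc : ∀ A : Set G, c ≤ (A.ncard : ℝ) / Fintype.card G →
      1 - η ≤ (({x : G | ∃ y ∈ A, dist x y < ε}).ncard : ℝ) / Fintype.card G)
    (𝒰 : Finset (Set G)) (m : ℕ) (hm : 𝒰.card ≤ m) (hmc : (m : ℝ) * c ≤ 1)
    (hLeb : ∀ x : G, ∃ U ∈ 𝒰, Metric.ball x ε ⊆ U)
    (F : Finset G) (hF : (F.card : ℝ) * η < 1) :
    ∃ U ∈ 𝒰, ∃ g : G, ∀ h ∈ F, g * h ∈ U := by
  classical
  set n := Fintype.card G with hn_def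
  have hn : 0 < (n : ℝ) := by
    exact_mod_cast Fintype.card_pos
  -- the sets U₀
  let T : Set G → Finset G := fun U => Finset.univ.filter (fun x => Metric.ball x ε ⊆ U)
  have hcover : (Finset.univ : Finset G) ⊆ 𝒰.biUnion T := by
    intro x _
    obtain ⟨U, hU, hsub⟩ := hLeb x
    exact Finset.mem_biUnion.2 ⟨U, hU, Finset.mem_filter.2 ⟨Finset.mem_univ _, hsub⟩⟩
  have hsum : (n : ℕ) ≤ ∑ U ∈ 𝒰, (T U).card := by
    calc n = (Finset.univ : Finset G).card := (Finset.card_univ).symm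
    _ ≤ (𝒰.biUnion T).card := Finset.card_le_card hcover
    _ ≤ ∑ U ∈ 𝒰, (T U).card := Finset.card_biUnion_le
  have h𝒰ne : 𝒰.Nonempty := by
    obtain ⟨U, hU, _⟩ := hLeb (Classical.arbitrary G); exact ⟨U, hU⟩
  obtain ⟨U, hU, hTU⟩ : ∃ U ∈ 𝒰, c * n ≤ ((T U).card : ℝ) := by
    by_contra hcon
    push_neg at hcon
    have h1 : (∑ U ∈ 𝒰, ((T U).card : ℝ)) < ∑ _U ∈ 𝒰, c * n :=
      Finset.sum_lt_sum_of_nonempty h𝒰ne (fun V hV => hcon V hV)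
    have h2 : (∑ _U ∈ 𝒰, c * n) = 𝒰.card * (c * n) := by
      rw [Finset.sum_const, nsmul_eq_mul]
    have h3 : (𝒰.card : ℝ) * (c * n) ≤ m * (c * n) := by
      apply mul_le_mul_of_nonneg_right _ (by positivity)
      exact_mod_cast hm
    have h4 : (m : ℝ) * (c * n) ≤ 1 * n := by
      rw [← mul_assoc]
      exact mul_le_mul_of_nonneg_right hmc (le_of_lt hn)
    have h5 : (n : ℝ) ≤ ∑ U ∈ 𝒰, ((T U).card : ℝ) := by
      exact_mod_cast hsum
    linarith
  -- apply concentration to A = T U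
  set N : Set G := {x : G | ∃ y ∈ (↑(T U) : Set G), dist x y < ε} with hN_def
  have hNmeas : 1 - η ≤ ((N.ncard : ℝ)) / n := by
    apply hconc
    rw [Set.ncard_coe_finset]
    rw [le_div_iff₀ hn]
    linarith [hTU]
  have hNsub : N ⊆ U := by
    rintro x ⟨y, hy, hd⟩
    have hy' : Metric.ball y ε ⊆ U := (Finset.mem_filter.1 hy).2
    exact hy' (Metric.mem_ball.2 hd)
  -- finset version of N
  let NF : Finset G := Finset.univ.filter (fun x => x ∈ N)
  have hNF : N.ncard = NF.card := by
    rw [Set.ncard_eq_toFinset_card']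
    congr 1
    ext x
    simp [NF]
  have hNFcard : (1 - η) * n ≤ (NF.card : ℝ) := by
    rw [hNF] at hNmeas
    rw [le_div_iff₀ hn] at hNmeas
    linarith
  -- complement
  let CF : Finset G := Finset.univ.filter (fun x => x ∉ N)
  have hsplit : NF.card + CF.card = n := by
    simpa [NF, CF] using Finset.card_filter_add_card_filter_not
      (s := (Finset.univ : Finset G)) (p := fun x => x ∈ N)
  have hCF : (CF.card : ℝ) ≤ η * n := by
    have : (NF.card : ℝ) + CF.card = n := by exact_mod_cast hsplit
    linarith
  -- bad sets
  have hbad : ∀ h : G,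
      (Finset.univ.filter (fun g => g * h ∉ N)).card = CF.card := by
    intro h
    apply Finset.card_bij (fun g _ => g * h)
    · intro a ha
      simp only [CF, Finset.mem_filter, Finset.mem_univ, true_and] at ha ⊢
      exact ha
    · intro a _ b _ hab
      exact mul_right_cancel hab
    · intro x hx
      simp only [CF, Finset.mem_filter, Finset.mem_univ, true_and] at hx
      exact ⟨x * h⁻¹, by simpa using hx, by simp⟩
  -- good set
  let good : Finset G := Finset.univ.filter (fun g => ∀ h ∈ F, g * h ∈ N)
  have hsubbad : (Finset.univ : Finset G) \ good ⊆
      F.biUnion (fun h => Finset.univ.filter (fun g => g * h ∉ N)) := by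
    intro g hg
    simp only [good, Finset.mem_sdiff, Finset.mem_filter, Finset.mem_univ, true_and,
      not_forall] at hg
    obtain ⟨h, hh, hgh⟩ := hg
    exact Finset.mem_biUnion.2 ⟨h, hh, by simp [hgh]⟩
  have hcard1 : n - good.card ≤ F.card * CF.card := by
    calc n - good.card = ((Finset.univ : Finset G) \ good).card := by
          rw [Finset.card_sdiff_of_subset (Finset.subset_univ _), Finset.card_univ]
    _ ≤ (F.biUnion (fun h => Finset.univ.filter (fun g => g * h ∉ N))).card :=
          Finset.card_le_card hsubbad
    _ ≤ ∑ h ∈ F, (Finset.univ.filter (fun g => g * h ∉ N)).card := Finset.card_biUnion_le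
    _ = F.card * CF.card := by
          rw [Finset.sum_congr rfl (fun h _ => hbad h), Finset.sum_const, smul_eq_mul]
  have hgoodpos : 0 < good.card := by
    by_contra hzero
    push_neg at hzero
    have hz : good.card = 0 := Nat.le_zero.1 hzero
    have h1 : (n : ℝ) ≤ F.card * CF.card := by
      have := hcard1
      rw [hz, Nat.sub_zero] at this
      exact_mod_cast this
    have h2 : (F.card : ℝ) * CF.card ≤ F.card * (η * n) :=
      mul_le_mul_of_nonneg_left hCF (by positivity)
    have h3 : (F.card : ℝ) * (η * n) < 1 * n := by
      rw [← mul_assoc]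
      exact mul_lt_mul_of_pos_right hF hn
    linarith
  obtain ⟨g, hg⟩ := Finset.card_pos.1 hgoodpos
  simp only [good, Finset.mem_filter, Finset.mem_univ, true_and] at hg
  exact ⟨U, hU, g, fun h hh => hNsub (hg h hh)⟩
end

section
/- Let G be a topological group that is amenable (every continuous action on a compact Hausdorff space admits an invariant Borel probability measure) and exotic (every continuous positive definite function on G is constant equal to 1, equivalently every strongly continuous unitary representation is trivial). Then G is extremely amenable: every continuous action of G on a compact Hausdorff space has a fixed point. -/
/-!
Let `μ` be a `G`-invariant Borel probability measure on `X` and `x` a point of its support.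
If `g • x ≠ x`, pick a Urysohn function `f` with `f x = 1` and `f (g • x) = 0`. The normalized
diagonal coefficient `g ↦ ⟪π(g) f, f⟫ / ‖f‖²` of the Koopman representation `π` on `L²(μ)` is
continuous (`X` is compact) and positive definite, so exoticity makes it identically `1`. Then
`‖π(g) f - f‖² = 2 ‖f‖² - 2 ⟪π(g) f, f⟫ = 0`, so `f ∘ (g • ·) = f` almost everywhere; being
continuous, the two functions agree on the support of `μ`, which is absurd at `x`.
-/

open MeasureTheory ComplexOrder

/-- A function `ψ : G → ℂ` is positive definite if `ψ(1) = 1` and all finite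
sums `∑_{i,j} aᵢ conj(aⱼ) ψ(gⱼ⁻¹ gᵢ)` are nonnegative reals. -/
def IsPosDef {G : Type*} [Group G] (ψ : G → ℂ) : Prop :=
  ψ 1 = 1 ∧ ∀ (n : ℕ) (a : Fin n → ℂ) (g : Fin n → G),
    0 ≤ ∑ i, ∑ j, a i * (starRingEnd ℂ) (a j) * ψ ((g j)⁻¹ * g i)

/-- A topological group `G` is amenable if every continuous action on a nonempty
compact Hausdorff space admits an invariant Borel probability measure. -/
def IsAmenableGroup (G : Type) [Group G] [TopologicalSpace G] : Prop :=
  ∀ (X : Type) [TopologicalSpace X] [CompactSpace X] [T2Space X] [Nonempty X]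
    [MeasurableSpace X] [BorelSpace X] [MulAction G X],
    Continuous (fun p : G × X => p.1 • p.2) →
    ∃ μ : Measure X, IsProbabilityMeasure μ ∧
      ∀ g : G, Measure.map (fun x => g • x) μ = μ

/-- A topological group `G` is exotic if every continuous positive definite
function on `G` is identically `1` (equivalently, every strongly continuous
unitary representation is trivial). -/
def IsExoticGroup (G : Type) [Group G] [TopologicalSpace G] : Prop :=
  ∀ ψ : G → ℂ, Continuous ψ → IsPosDef ψ → ∀ g : G, ψ g = 1

section Support

variable {X : Type*} [TopologicalSpace X] [MeasurableSpace X] {μ : Measure X}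

lemma MeasureTheory.Measure.nonempty_support_of_compactSpace [CompactSpace X] (hμ : μ ≠ 0) :
    μ.support.Nonempty := by
  by_contra h
  refine hμ <| measure_univ_eq_zero.mp <| isCompact_univ.measure_zero_of_nhdsWithin fun x _ => ?_
  obtain ⟨U, hU, hU0⟩ := notMem_support_iff_exists.mp fun hx => h ⟨x, hx⟩
  exact ⟨U, mem_nhdsWithin_of_mem_nhds hU, hU0⟩

theorem Continuous.eqOn_support_of_ae_eq {Y : Type*} [TopologicalSpace Y] [T2Space Y]
    {φ ψ : X → Y} (hφ : Continuous φ) (hψ : Continuous ψ) (h : φ =ᵐ[μ] ψ) :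
    Set.EqOn φ ψ μ.support := by
  intro x hx
  by_contra hne
  have hopen : IsOpen {y | φ y ≠ ψ y} := (isClosed_eq hφ hψ).isOpen_compl
  exact ((μ.mem_support_iff_forall x).mp hx _ (hopen.mem_nhds hne)).ne' (ae_iff.mp h)

theorem Continuous.integral_pos_of_mem_support {φ : X → ℝ} (hφ : Continuous φ) (hφ0 : 0 ≤ φ)
    (hint : Integrable φ μ) {x : X} (hx : x ∈ μ.support) (hφx : 0 < φ x) :
    0 < ∫ y, φ y ∂μ :=
  (integral_nonneg hφ0).lt_of_ne fun h => hφx.ne' <|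
    hφ.eqOn_support_of_ae_eq continuous_const
      ((integral_eq_zero_iff_of_nonneg hφ0 hint).mp h.symm) hx

end Support

theorem Continuous.integrable_of_compactSpace {X E : Type*} [TopologicalSpace X] [CompactSpace X]
    [MeasurableSpace X] [OpensMeasurableSpace X] [NormedAddCommGroup E] {μ : Measure X}
    [IsFiniteMeasure μ] {φ : X → E} (hφ : Continuous φ) : Integrable φ μ :=
  hφ.integrable_of_hasCompactSupport (.of_compactSpace φ)

theorem continuous_integral_of_continuous_uncurry {Y X E : Type*} [TopologicalSpace Y]
    [TopologicalSpace X] [CompactSpace X] [MeasurableSpace X] [BorelSpace X]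
    [NormedAddCommGroup E] [NormedSpace ℝ E] [SecondCountableTopologyEither X E]
    {μ : Measure X} [IsFiniteMeasure μ] {F : Y → X → E} (hF : Continuous (Function.uncurry F)) :
    Continuous fun y => ∫ x, F y x ∂μ := by
  have hint : Continuous fun φ : C(X, E) => ∫ x, φ x ∂μ := by
    have h : (fun φ : C(X, E) => ∫ x, φ x ∂μ) =
        fun φ => ∫ x, ContinuousMap.toLp 1 μ ℝ φ x ∂μ :=
      funext fun φ => integral_congr_ae (ContinuousMap.coeFn_toLp μ φ).symm
    rw [h]
    exact continuous_integral.comp (ContinuousMap.toLp 1 μ ℝ).continuous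
  exact hint.comp (ContinuousMap.mk _ hF).curry.continuous

theorem sum_mul_conj_integral_mul_nonneg {X ι : Type*} [MeasurableSpace X] {μ : Measure X}
    [Fintype ι] {F : ι → X → ℝ} (hF : ∀ i j, Integrable (fun x => F i x * F j x) μ)
    (a : ι → ℂ) :
    0 ≤ ∑ i, ∑ j, a i * starRingEnd ℂ (a j) * ((∫ x, F i x * F j x ∂μ : ℝ) : ℂ) := by
  have hint : ∀ i j, Integrable
      (fun x => a i * starRingEnd ℂ (a j) * ((F i x * F j x : ℝ) : ℂ)) μ :=
    fun i j => (hF i j).ofReal.const_mul _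
  have hsum : ∑ i, ∑ j, a i * starRingEnd ℂ (a j) * ((∫ x, F i x * F j x ∂μ : ℝ) : ℂ) =
      ((∫ x, ‖∑ i, a i * (F i x : ℂ)‖ ^ 2 ∂μ : ℝ) : ℂ) := calc
    _ = ∑ i, ∑ j, ∫ x, a i * starRingEnd ℂ (a j) * ((F i x * F j x : ℝ) : ℂ) ∂μ := by
      simp_rw [← integral_complex_ofReal, ← integral_const_mul]
    _ = ∫ x, ∑ i, ∑ j, a i * starRingEnd ℂ (a j) * ((F i x * F j x : ℝ) : ℂ) ∂μ := by
      rw [integral_finsetSum _ fun i _ => integrable_finsetSum _ fun j _ => hint i j]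
      exact Finset.sum_congr rfl fun i _ => (integral_finsetSum _ fun j _ => hint i j).symm
    _ = ∫ x, ((‖∑ i, a i * (F i x : ℂ)‖ ^ 2 : ℝ) : ℂ) ∂μ := by
      congr 1 with x
      rw [Complex.ofReal_pow, ← Complex.mul_conj', map_sum, Finset.sum_mul_sum]
      simp only [map_mul, Complex.conj_ofReal, Complex.ofReal_mul]
      exact Finset.sum_congr rfl fun i _ => Finset.sum_congr rfl fun j _ => by ring
    _ = _ := integral_complex_ofReal
  rw [hsum, Complex.zero_le_real]
  exact integral_nonneg fun x => sq_nonneg _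

section Koopman

variable {G X : Type*} [Group G] [MulAction G X] [MeasurableSpace X]

/-- For `f` real and `μ` invariant this is `⟪π(g) f, f⟫`, where `π(g) f = f ∘ (g⁻¹ • ·)` is the
Koopman representation on `L²(μ)`. -/
noncomputable def koopmanCoeff (μ : Measure X) (f : X → ℝ) (g : G) : ℝ :=
  ∫ x, f x * f (g • x) ∂μ

variable {μ : Measure X}

lemma koopmanCoeff_inv_mul [MeasurableConstSMul G X] [SMulInvariantMeasure G X μ]
    (f : X → ℝ) (g h : G) :
    koopmanCoeff μ f (h⁻¹ * g) = ∫ x, f (g⁻¹ • x) * f (h⁻¹ • x) ∂μ := by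
  rw [← integral_smul_eq_self _ (g := g)]
  simp only [koopmanCoeff, smul_smul, inv_mul_cancel, one_smul]

variable [TopologicalSpace X] [CompactSpace X] [BorelSpace X] [IsFiniteMeasure μ]

lemma koopmanCoeff_one_pos {f : X → ℝ} (hf : Continuous f) {x : X} (hx : x ∈ μ.support)
    (hfx : f x ≠ 0) : 0 < koopmanCoeff μ f (1 : G) := by
  simp only [koopmanCoeff, one_smul]
  exact (hf.mul hf).integral_pos_of_mem_support (fun y => mul_self_nonneg (f y))
    (hf.mul hf).integrable_of_compactSpace hx (mul_self_pos.mpr hfx)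

variable [TopologicalSpace G] [ContinuousSMul G X]

lemma continuous_koopmanCoeff (f : C(X, ℝ)) : Continuous (koopmanCoeff μ f : G → ℝ) :=
  continuous_integral_of_continuous_uncurry (F := fun (g : G) x => f x * f (g • x)) (by fun_prop)

variable [SMulInvariantMeasure G X μ]

lemma isPosDef_koopmanCoeff (f : C(X, ℝ)) (hf : koopmanCoeff μ f (1 : G) ≠ 0) :
    IsPosDef fun g : G => (((koopmanCoeff μ f (1 : G))⁻¹ * koopmanCoeff μ f g : ℝ) : ℂ) := by
  refine ⟨by simp only [inv_mul_cancel₀ hf, Complex.ofReal_one], fun n a g => ?_⟩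
  have hc : 0 ≤ (koopmanCoeff μ f (1 : G))⁻¹ :=
    inv_nonneg.mpr <| integral_nonneg fun x => by simpa using mul_self_nonneg (f x)
  simp_rw [Complex.ofReal_mul, koopmanCoeff_inv_mul,
    mul_left_comm _ (((koopmanCoeff μ f (1 : G))⁻¹ : ℝ) : ℂ), ← Finset.mul_sum]
  exact mul_nonneg (Complex.zero_le_real.mpr hc) <| sum_mul_conj_integral_mul_nonneg
    (F := fun i x => f ((g i)⁻¹ • x))
    (fun i j => (by fun_prop : Continuous _).integrable_of_compactSpace) a

lemma integral_comp_smul_sub_sq (f : C(X, ℝ)) (g : G) :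
    ∫ x, (f (g • x) - f x) ^ 2 ∂μ = 2 * (koopmanCoeff μ f (1 : G) - koopmanCoeff μ f g) := by
  have hff : Integrable (fun x => f x * f x) μ :=
    (by fun_prop : Continuous _).integrable_of_compactSpace
  have hgg : Integrable (fun x => f (g • x) * f (g • x)) μ :=
    (by fun_prop : Continuous _).integrable_of_compactSpace
  have hfg : Integrable (fun x => f x * f (g • x)) μ :=
    (by fun_prop : Continuous _).integrable_of_compactSpace
  calc ∫ x, (f (g • x) - f x) ^ 2 ∂μ
      = ∫ x, (f (g • x) * f (g • x) + f x * f x - 2 * (f x * f (g • x))) ∂μ := by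
        congr 1 with x; ring
    _ = 2 * (koopmanCoeff μ f (1 : G) - koopmanCoeff μ f g) := by
        rw [integral_sub (by exact hgg.add hff) (hfg.const_mul 2), integral_add hgg hff,
          integral_const_mul, integral_smul_eq_self (fun x => f x * f x)]
        simp only [koopmanCoeff, one_smul]
        ring

end Koopman

theorem IsExoticGroup.comp_smul_ae_eq {G X : Type} [Group G] [TopologicalSpace G]
    (hG : IsExoticGroup G) [MulAction G X] [TopologicalSpace X] [CompactSpace X]
    [MeasurableSpace X] [BorelSpace X] [ContinuousSMul G X] {μ : Measure X} [IsFiniteMeasure μ]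
    [SMulInvariantMeasure G X μ] (f : C(X, ℝ)) (hf : koopmanCoeff μ f (1 : G) ≠ 0) (g : G) :
    (fun x => f (g • x)) =ᵐ[μ] f := by
  have hψ : (((koopmanCoeff μ f (1 : G))⁻¹ * koopmanCoeff μ f g : ℝ) : ℂ) = 1 :=
    hG _ (Complex.continuous_ofReal.comp <|
      continuous_const.mul (continuous_koopmanCoeff f)) (isPosDef_koopmanCoeff f hf) g
  rw [← Complex.ofReal_one, Complex.ofReal_inj, inv_mul_eq_one₀ hf] at hψ
  have hsq : ∫ x, (f (g • x) - f x) ^ 2 ∂μ = 0 := by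
    rw [integral_comp_smul_sub_sq, hψ, sub_self, mul_zero]
  have hae := (integral_eq_zero_iff_of_nonneg (fun x => sq_nonneg _)
    (by fun_prop : Continuous fun x => (f (g • x) - f x) ^ 2).integrable_of_compactSpace).mp hsq
  filter_upwards [hae] with x hx
  exact sub_eq_zero.mp (pow_eq_zero_iff two_ne_zero |>.mp hx)

theorem amenable_exotic_implies_extremely_amenable_general (G : Type) [Group G]
    [TopologicalSpace G]
    (hamen : IsAmenableGroup G) (hexotic : IsExoticGroup G) :
    ∀ (X : Type) [TopologicalSpace X] [CompactSpace X] [T2Space X] [Nonempty X]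
      [MulAction G X], Continuous (fun p : G × X => p.1 • p.2) →
      ∃ x : X, ∀ g : G, g • x = x := by
  intro X _ _ _ _ _ hcont
  borelize X
  have : ContinuousSMul G X := ⟨hcont⟩
  obtain ⟨μ, hμ, hμ_inv⟩ := hamen X hcont
  have : SMulInvariantMeasure G X μ := ((smulInvariantMeasure_tfae G μ).out 0 5).mpr hμ_inv
  obtain ⟨x, hx⟩ := μ.nonempty_support_of_compactSpace (IsProbabilityMeasure.ne_zero μ)
  refine ⟨x, fun g => by_contra fun hgx => ?_⟩
  obtain ⟨f, hf_gx, hf_x, -⟩ := exists_continuous_zero_one_of_isClosed isClosed_singleton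
    isClosed_singleton (Set.disjoint_singleton.mpr hgx)
  have hf : koopmanCoeff μ f (1 : G) ≠ 0 :=
    (koopmanCoeff_one_pos f.continuous hx (by simp [hf_x rfl])).ne'
  have hfg_x := (by fun_prop : Continuous fun y => f (g • y)).eqOn_support_of_ae_eq
    f.continuous (hexotic.comp_smul_ae_eq f hf g) hx
  simp [hf_gx rfl, hf_x rfl] at hfg_x

/-- An amenable exotic topological group is extremely amenable: every continuous
action on a nonempty compact Hausdorff space has a fixed point. -/
theorem amenable_exotic_implies_extremely_amenable (G : Type) [Group G]
    [TopologicalSpace G] [IsTopologicalGroup G]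
    (hamen : IsAmenableGroup G) (hexotic : IsExoticGroup G) :
    ∀ (X : Type) [TopologicalSpace X] [CompactSpace X] [T2Space X] [Nonempty X]
      [MulAction G X], Continuous (fun p : G × X => p.1 • p.2) →
      ∃ x : X, ∀ g : G, g • x = x :=
  amenable_exotic_implies_extremely_amenable_general G hamen hexotic
end
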